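/- For every odd integer d ≥ 3 and ρ > 0: ∫_ρ^∞ dt/sinh^{d−1}(t) = (−1)^{(d−1)/2}·[ (d−3)!!/(d−2)!! + ((d−3)/2)! · Σ_{k=1}^{(d−1)/2} (−1)^k·coth^{2k−1}(ρ)/((2k−1)·(k−1)!·((d−2k−1)/2)!) ]. -/

import Mathlib

open Finset Filter

/-- Double factorial: `dfact 0 = dfact 1 = 1`, `dfact (n+2) = (n+2) * dfact n`.
(With natural subtraction, `(-1)!!` occurring in the formulas is represented by
`dfact 0 = 1`, as intended.) -/
def dfact : ℕ → ℕ
  | 0 => 1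
  | 1 => 1
  | (n + 2) => (n + 2) * dfact n

lemma dfact_pos : ∀ n, 0 < dfact n
  | 0 => Nat.one_pos
  | 1 => Nat.one_pos
  | (n+2) => Nat.mul_pos (Nat.succ_pos _) (dfact_pos n)

lemma sum_ST (n : ℕ) :
    ∑ j ∈ range (n+2), (-1:ℝ)^j * ((n+1).choose j : ℝ) / (2*(j:ℝ)+1)
      = ∑ j ∈ range (n+1), (-1:ℝ)^j * (n.choose j : ℝ) / (2*(j:ℝ)+1)
        - ∑ j ∈ range (n+1), (-1:ℝ)^j * (n.choose j : ℝ) / (2*(j:ℝ)+3) := by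
  rw [Finset.sum_range_succ' (fun j => (-1:ℝ)^j * ((n+1).choose j : ℝ) / (2*(j:ℝ)+1)) (n+1)]
  have h1 : ∀ j ∈ range (n+1),
      (-1:ℝ)^(j+1) * ((n+1).choose (j+1) : ℝ) / (2*((j+1 : ℕ):ℝ)+1)
        = (-1)^(j+1) * ((n.choose (j+1) : ℕ) : ℝ) / (2*(j:ℝ)+3)
            + (-1)^(j+1) * ((n.choose j : ℕ) : ℝ) / (2*(j:ℝ)+3) := by
    intro j _
    rw [Nat.choose_succ_succ]
    push_cast
    ring
  rw [Finset.sum_congr rfl h1, Finset.sum_add_distrib]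
  have h2 : ∑ j ∈ range (n+1), (-1:ℝ)^j * (n.choose j : ℝ) / (2*(j:ℝ)+1)
      = (∑ j ∈ range n, (-1:ℝ)^(j+1) * (n.choose (j+1) : ℝ) / (2*((j+1 : ℕ):ℝ)+1)) + 1 := by
    rw [Finset.sum_range_succ' (fun j => (-1:ℝ)^j * (n.choose j : ℝ) / (2*(j:ℝ)+1)) n]
    norm_num
  have h3 : ∑ j ∈ range (n+1), (-1:ℝ)^(j+1) * (n.choose (j+1) : ℝ) / (2*(j:ℝ)+3)
      = ∑ j ∈ range n, (-1:ℝ)^(j+1) * (n.choose (j+1) : ℝ) / (2*(j:ℝ)+3) := by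
    rw [Finset.sum_range_succ]
    simp [Nat.choose_succ_self]
  have h4 : ∀ j ∈ range n, (-1:ℝ)^(j+1) * (n.choose (j+1) : ℝ) / (2*((j+1 : ℕ):ℝ)+1)
      = (-1:ℝ)^(j+1) * (n.choose (j+1) : ℝ) / (2*(j:ℝ)+3) := by
    intro j _; push_cast; ring_nf
  rw [h3] at *
  rw [h2, Finset.sum_congr rfl h4]
  have h5 : ∑ x ∈ range (n+1), (-1:ℝ)^(x+1) * (n.choose x:ℝ)/(2*(x:ℝ)+3)
      = - ∑ x ∈ range (n+1), (-1:ℝ)^x * (n.choose x:ℝ)/(2*(x:ℝ)+3) := by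
    rw [← Finset.sum_neg_distrib]
    exact Finset.sum_congr rfl (fun x _ => by ring)
  rw [h5, Nat.choose_zero_right]
  push_cast
  ring

lemma sum_b (n : ℕ) :
    ∑ j ∈ range (n+2), (-1:ℝ)^j * ((n+1).choose j : ℝ) / (2*(j:ℝ)+1)
      = 2*((n:ℝ)+1) * ∑ j ∈ range (n+1), (-1:ℝ)^j * (n.choose j : ℝ) / (2*(j:ℝ)+3) := by
  have key : ∀ j ∈ range (n+2),
      (-1:ℝ)^j * ((n+1).choose j : ℝ) / (2*(j:ℝ)+1)
        = (-1)^j * ((n+1).choose j : ℝ)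
            - 2 * ((-1)^j * ((j:ℝ) * ((n+1).choose j : ℝ)) / (2*(j:ℝ)+1)) := by
    intro j _
    have hne : (2*(j:ℝ)+1) ≠ 0 := by positivity
    field_simp
    ring
  rw [Finset.sum_congr rfl key, Finset.sum_sub_distrib]
  have halt : ∑ j ∈ range (n+2), (-1:ℝ)^j * ((n+1).choose j : ℝ) = 0 := by
    have := Int.alternating_sum_range_choose_of_ne (n := n+1) (by omega)
    have := congrArg (fun z : ℤ => (z : ℝ)) this
    push_cast at this
    simpa using this
  rw [halt]
  rw [← Finset.mul_sum]
  have e : range (n+2) = range (n+1+1) := rfl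
  rw [e]
  rw [Finset.sum_range_succ' (fun j => (-1:ℝ)^j * ((j:ℝ) * ((n+1).choose j : ℝ)) / (2*(j:ℝ)+1)) (n+1)]
  have h6 : ∀ j ∈ range (n+1),
      (-1:ℝ)^(j+1) * (((j+1:ℕ):ℝ) * ((n+1).choose (j+1) : ℝ)) / (2*((j+1:ℕ):ℝ)+1)
        = -(((n:ℝ)+1) * ((-1:ℝ)^j * (n.choose j : ℝ) / (2*(j:ℝ)+3))) := by
    intro j _
    have hc : ((j:ℝ)+1) * ((n+1).choose (j+1) : ℝ) = ((n:ℝ)+1) * (n.choose j : ℝ) := by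
      have := Nat.add_one_mul_choose_eq n j
      have := congrArg (fun z : ℕ => (z : ℝ)) this
      push_cast at this
      linarith [this]
    push_cast
    have hne : (2*(j:ℝ)+3) ≠ 0 := by positivity
    field_simp
    linear_combination ((-1:ℝ)^(j+1) * (2*(j:ℝ)+3)) * hc
  rw [Finset.sum_congr rfl h6]
  rw [Finset.sum_neg_distrib, ← Finset.mul_sum]
  norm_num
  ring

lemma binom_dfact (n : ℕ) :
    ∑ j ∈ range (n+1), (-1:ℝ)^j * (n.choose j : ℝ) / (2*(j:ℝ)+1)
      = (dfact (2*n) : ℝ) / (dfact (2*n+1) : ℝ) := by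
  induction n with
  | zero => simp [dfact]
  | succ n ih =>
    have hST := sum_ST n
    have hb := sum_b n
    have h1 : ∑ j ∈ range (n+2), (-1:ℝ)^j * ((n+1).choose j : ℝ) / (2*(j:ℝ)+1)
        = (2*(n:ℝ)+2) / (2*(n:ℝ)+3) * ((dfact (2*n) : ℝ) / (dfact (2*n+1) : ℝ)) := by
      rw [ih] at hST
      have hn : (0:ℝ) < 2*(n:ℝ)+3 := by positivity
      set S := ∑ j ∈ range (n+2), (-1:ℝ)^j * ((n+1).choose j : ℝ) / (2*(j:ℝ)+1) with hS
      set T := ∑ j ∈ range (n+1), (-1:ℝ)^j * (n.choose j : ℝ) / (2*(j:ℝ)+3) with hT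
      have : (2*(n:ℝ)+3) * S = (2*(n:ℝ)+2) * ((dfact (2*n) : ℝ) / (dfact (2*n+1) : ℝ)) := by
        have h2 : S = (dfact (2*n) : ℝ) / (dfact (2*n+1) : ℝ) - T := hST
        have h3 : S = (2*(n:ℝ)+2) * T := by rw [hb]; ring
        nlinarith [h2, h3]
      rw [div_mul_eq_mul_div, eq_div_iff hn.ne']
      linear_combination this
    have e2 : dfact (2*(n+1)) = (2*n+2) * dfact (2*n) := by
      have : 2*(n+1) = (2*n)+2 := by ring
      rw [this]; rfl
    have e3 : dfact (2*(n+1)+1) = (2*n+3) * dfact (2*n+1) := by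
      have : 2*(n+1)+1 = (2*n+1)+2 := by ring
      rw [this, dfact]
    have hd1 : ((dfact (2*n+1) : ℝ)) ≠ 0 := by
      exact_mod_cast (dfact_pos (2*n+1)).ne'
    have hd0 : ((dfact (2*n) : ℝ)) ≠ 0 := by
      exact_mod_cast (dfact_pos (2*n)).ne'
    have e4 : n+1+1 = n+2 := rfl
    rw [e4, h1, e2, e3]
    push_cast
    have hn3 : (2*(n:ℝ)+3) ≠ 0 := by positivity
    field_simp
    try ring

lemma sum_ek (n : ℕ) (u : ℝ) :
    (n.factorial : ℝ) * ∑ k ∈ Icc 1 (n+1),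
        (-1:ℝ)^k / (((k-1).factorial : ℝ) * (((n+1)-k).factorial : ℝ)) * u^(k-1)
      = -(1-u)^n := by
  rw [← Finset.Ico_add_one_right_eq_Icc, Finset.sum_Ico_eq_sum_range]
  have e : n+1+1-1 = n+1 := rfl
  rw [e, Finset.mul_sum]
  have h : ∀ i ∈ range (n+1),
      (n.factorial : ℝ) * ((-1:ℝ)^(1+i) / (((1+i-1).factorial : ℝ) * (((n+1)-(1+i)).factorial : ℝ)) * u^(1+i-1))
        = -((-u)^i * 1^(n-i) * (n.choose i : ℝ)) := by
    intro i hi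
    rw [Finset.mem_range] at hi
    have hin : i ≤ n := by omega
    have e1 : 1+i-1 = i := by omega
    have e2 : (n+1)-(1+i) = n-i := by omega
    rw [e1, e2]
    have hfac : (n.choose i : ℝ) * (i.factorial : ℝ) * ((n-i).factorial : ℝ) = (n.factorial : ℝ) := by
      exact_mod_cast congrArg (fun z : ℕ => (z:ℝ)) (Nat.choose_mul_factorial_mul_factorial hin)
    have hne1 : (i.factorial : ℝ) ≠ 0 := by exact_mod_cast i.factorial_ne_zero
    have hne2 : ((n-i).factorial : ℝ) ≠ 0 := by exact_mod_cast (n-i).factorial_ne_zero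
    simp only [one_pow, mul_one]
    rw [show (-u : ℝ) = (-1)*u from by ring, mul_pow]
    field_simp
    linear_combination ((-1:ℝ)^i * u^i) * hfac
  rw [Finset.sum_congr rfl h, Finset.sum_neg_distrib, ← add_pow]
  ring_nf

lemma sum_eval_one (n : ℕ) :
    (n.factorial : ℝ) * ∑ k ∈ Icc 1 (n+1),
        (-1:ℝ)^k / ((2*(k:ℝ)-1) * ((k-1).factorial : ℝ) * (((n+1)-k).factorial : ℝ))
      = - ∑ j ∈ range (n+1), (-1:ℝ)^j * (n.choose j : ℝ) / (2*(j:ℝ)+1) := by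
  rw [← Finset.Ico_add_one_right_eq_Icc, Finset.sum_Ico_eq_sum_range]
  have e : n+1+1-1 = n+1 := rfl
  rw [e, Finset.mul_sum, ← Finset.sum_neg_distrib]
  refine Finset.sum_congr rfl ?_
  intro i hi
  rw [Finset.mem_range] at hi
  have hin : i ≤ n := by omega
  have e1 : 1+i-1 = i := by omega
  have e2 : (n+1)-(1+i) = n-i := by omega
  rw [e1, e2]
  have hfac : (n.choose i : ℝ) * (i.factorial : ℝ) * ((n-i).factorial : ℝ) = (n.factorial : ℝ) := by
    exact_mod_cast congrArg (fun z : ℕ => (z:ℝ)) (Nat.choose_mul_factorial_mul_factorial hin)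
  have hne1 : (i.factorial : ℝ) ≠ 0 := by exact_mod_cast i.factorial_ne_zero
  have hne2 : ((n-i).factorial : ℝ) ≠ 0 := by exact_mod_cast (n-i).factorial_ne_zero
  have h21 : (2*((1+i:ℕ):ℝ)-1) = 2*(i:ℝ)+1 := by push_cast; ring
  have hne3 : (2*(i:ℝ)+1) ≠ 0 := by positivity
  rw [h21]
  field_simp
  linear_combination (-1:ℝ)^i * hfac

lemma coth_tendsto_one :
    Tendsto (fun x : ℝ => Real.cosh x / Real.sinh x) atTop (nhds 1) := by
  have hE : Tendsto (fun x : ℝ => Real.exp (-(2*x))) atTop (nhds 0) := by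
    apply Real.tendsto_exp_atBot.comp
    exact tendsto_neg_atBot_iff.mpr (tendsto_id.const_mul_atTop two_pos)
  have hlim : Tendsto (fun x : ℝ => (1 + Real.exp (-(2*x))) / (1 - Real.exp (-(2*x)))) atTop (nhds 1) := by
    have h1 : Tendsto (fun x : ℝ => (1:ℝ) + Real.exp (-(2*x))) atTop (nhds (1+0)) :=
      tendsto_const_nhds.add hE
    have h2 : Tendsto (fun x : ℝ => (1:ℝ) - Real.exp (-(2*x))) atTop (nhds (1-0)) :=
      tendsto_const_nhds.sub hE
    have := h1.div h2 (by norm_num)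
    simp only [add_zero, sub_zero, div_one] at this
    exact this
  apply hlim.congr'
  filter_upwards [eventually_gt_atTop (0:ℝ)] with x hx
  have hs : Real.sinh x ≠ 0 := (Real.sinh_pos_iff.mpr hx).ne'
  have hE1 : Real.exp (-(2*x)) < 1 := by
    rw [Real.exp_lt_one_iff]; linarith
  have hden : (1 - Real.exp (-(2*x))) ≠ 0 := by linarith
  rw [div_eq_div_iff hden hs]
  rw [Real.cosh_eq, Real.sinh_eq, show -(2*x) = -x + -x from by ring, Real.exp_add]
  have hab : Real.exp x * Real.exp (-x) = 1 := by
    rw [← Real.exp_add]; simp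
  linear_combination (Real.exp (-x)) * hab

lemma final_alg (n : ℕ) (u S : ℝ) (hek : (n.factorial:ℝ) * S = -(1-u)^n) :
    (u-1)^(n+1) = -((-1:ℝ)^(n+1) * ((n.factorial:ℝ) * (S * (1-u)))) := by
  have h : (u-1)^(n+1) = (-1:ℝ)^(n+1) * ((1-u)^n * (1-u)) := by
    rw [show u-1 = -(1-u) from by ring, neg_pow, pow_succ (1-u) n]
  rw [h, ← mul_assoc ((n.factorial:ℝ)) S (1-u), hek]
  ring

lemma hasDeriv_sum (n : ℕ) (x : ℝ) (hs : Real.sinh x ≠ 0) :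
    HasDerivAt (fun y => ∑ k ∈ Icc 1 (n+1),
        (-1:ℝ)^k * (Real.cosh y / Real.sinh y)^(2*k-1) /
          ((2*(k:ℝ)-1) * ((k-1).factorial : ℝ) * (((n+1)-k).factorial : ℝ)))
      (∑ k ∈ Icc 1 (n+1),
        (-1:ℝ)^k / (((k-1).factorial : ℝ) * (((n+1)-k).factorial : ℝ))
          * ((Real.cosh x / Real.sinh x)^2)^(k-1) * (1 - (Real.cosh x / Real.sinh x)^2)) x := by
  apply HasDerivAt.fun_sum
  intro k hk
  rw [Finset.mem_Icc] at hk
  obtain ⟨hk1, hk2⟩ := hk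
  have hcoth : HasDerivAt (fun y => Real.cosh y / Real.sinh y)
      (1 - (Real.cosh x / Real.sinh x)^2) x := by
    have h := (Real.hasDerivAt_cosh x).div (Real.hasDerivAt_sinh x) hs
    refine h.congr_deriv (Eq.symm ?_)
    field_simp
  have h1 := hcoth.pow (n := 2*k-1)
  have h2 := (h1.const_mul ((-1:ℝ)^k)).div_const ((2*(k:ℝ)-1) * ((k-1).factorial : ℝ) * (((n+1)-k).factorial : ℝ))
  refine h2.congr_deriv (Eq.symm ?_)
  have hne1 : ((k-1).factorial : ℝ) ≠ 0 := by exact_mod_cast (k-1).factorial_ne_zero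
  have hne2 : (((n+1)-k).factorial : ℝ) ≠ 0 := by exact_mod_cast ((n+1)-k).factorial_ne_zero
  have hne3 : (2*(k:ℝ)-1) ≠ 0 := by
    have : (1:ℝ) ≤ (k:ℝ) := by exact_mod_cast hk1
    nlinarith
  have hc1 : ((2*k-1 : ℕ) : ℝ) = 2*(k:ℝ)-1 := by
    rw [Nat.cast_sub (by omega)]; push_cast; ring
  have hc2 : (Real.cosh x / Real.sinh x)^(2*k-1-1) = ((Real.cosh x / Real.sinh x)^2)^(k-1) := by
    rw [← pow_mul]
    congr 1
    omega
  rw [hc1, hc2]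
  field_simp

theorem integral_I_d_odd (d : ℕ) (hd : 3 ≤ d) (hdo : Odd d) (ρ : ℝ) (hρ : 0 < ρ) :
    (∫ t in Set.Ioi ρ, 1 / Real.sinh t ^ (d - 1)) =
      (-1 : ℝ) ^ ((d - 1) / 2) *
        ((dfact (d - 3) : ℝ) / (dfact (d - 2) : ℝ) +
          (((d - 3) / 2).factorial : ℝ) * ∑ k ∈ Finset.Icc 1 ((d - 1) / 2),
            (-1 : ℝ) ^ k * (Real.cosh ρ / Real.sinh ρ) ^ (2 * k - 1) /
              ((2 * (k : ℝ) - 1) * ((k - 1).factorial : ℝ) *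
                (((d - 2 * k - 1) / 2).factorial : ℝ))) := by
  obtain ⟨m, rfl⟩ := hdo
  have hm1 : 1 ≤ m := by omega
  obtain ⟨n, rfl⟩ : ∃ n, m = n + 1 := ⟨m-1, by omega⟩
  have e1 : 2*(n+1)+1-1 = 2*n+2 := by omega
  have e2 : (2*n+2)/2 = n+1 := by omega
  have e3 : 2*(n+1)+1-3 = 2*n := by omega
  have e4 : (2*n)/2 = n := by omega
  have e5 : 2*(n+1)+1-2 = 2*n+1 := by omega
  rw [e1, e3, e5, e2, e4]
  have esum : ∀ x : ℝ, ∑ k ∈ Icc 1 (n+1),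
      (-1:ℝ)^k * (Real.cosh x/Real.sinh x)^(2*k-1) /
        ((2*(k:ℝ)-1) * ((k-1).factorial:ℝ) * (((2*(n+1)+1-2*k-1)/2).factorial : ℝ))
      = ∑ k ∈ Icc 1 (n+1),
      (-1:ℝ)^k * (Real.cosh x/Real.sinh x)^(2*k-1) /
        ((2*(k:ℝ)-1) * ((k-1).factorial:ℝ) * ((((n+1)-k)).factorial : ℝ)) := by
    intro x
    refine Finset.sum_congr rfl ?_
    intro k hk
    rw [Finset.mem_Icc] at hk
    have : (2*(n+1)+1-2*k-1)/2 = (n+1)-k := by omega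
    rw [this]
  rw [esum ρ]
  set C0 : ℝ := (dfact (2*n) : ℝ) / (dfact (2*n+1) : ℝ) with hC0
  have key := MeasureTheory.integral_Ioi_of_hasDerivAt_of_nonneg'
    (g := fun x => -((-1:ℝ)^(n+1) * (C0 + (n.factorial:ℝ) * ∑ k ∈ Icc 1 (n+1),
        (-1:ℝ)^k * (Real.cosh x/Real.sinh x)^(2*k-1) /
          ((2*(k:ℝ)-1) * ((k-1).factorial:ℝ) * ((((n+1)-k)).factorial : ℝ)))))
    (g' := fun x => 1 / Real.sinh x ^ (2*n+2)) (a := ρ) (l := 0)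
    ?_ ?_ ?_
  · rw [key, zero_sub, neg_neg]
  · -- derivative
    intro x hx
    have hx0 : 0 < x := lt_of_lt_of_le hρ hx
    have hs : 0 < Real.sinh x := Real.sinh_pos_iff.mpr hx0
    have hsum := hasDeriv_sum n x hs.ne'
    have h := (((hsum.const_mul ((n.factorial:ℝ))).const_add C0).const_mul ((-1:ℝ)^(n+1))).neg
    refine h.congr_deriv (Eq.symm ?_)
    set u : ℝ := (Real.cosh x / Real.sinh x)^2 with hu
    have h2 : ∑ k ∈ Icc 1 (n+1),
        (-1:ℝ)^k / (((k-1).factorial : ℝ) * (((n+1)-k).factorial : ℝ)) * u^(k-1) * (1 - u)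
        = (∑ k ∈ Icc 1 (n+1),
            (-1:ℝ)^k / (((k-1).factorial : ℝ) * (((n+1)-k).factorial : ℝ)) * u^(k-1)) * (1-u) :=
      (Finset.sum_mul _ _ _).symm
    have hek := sum_ek n u
    have hu1 : u - 1 = 1 / Real.sinh x^2 := by
      have hc2 := Real.cosh_sq x
      rw [hu]
      field_simp
      try linear_combination hc2
    have hsn : (1:ℝ) / Real.sinh x^(2*n+2) = (u-1)^(n+1) := by
      rw [hu1, div_pow, one_pow, ← pow_mul]
      try congr 2
      try omega
    show (1:ℝ) / Real.sinh x ^ (2*n+2) = _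
    rw [hsn, h2]
    exact final_alg n u _ hek
  · -- nonneg
    intro x hx
    have hx0 : 0 < x := lt_trans hρ hx
    have hs : 0 < Real.sinh x := Real.sinh_pos_iff.mpr hx0
    exact le_of_lt (div_pos one_pos (pow_pos hs _))
  · -- limit
    have hc := coth_tendsto_one
    have hterm : ∀ k : ℕ, Tendsto (fun x : ℝ =>
        (-1:ℝ)^k * (Real.cosh x/Real.sinh x)^(2*k-1) /
          ((2*(k:ℝ)-1) * ((k-1).factorial:ℝ) * ((((n+1)-k)).factorial : ℝ)))
        atTop (nhds ((-1:ℝ)^k * (1:ℝ)^(2*k-1) /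
          ((2*(k:ℝ)-1) * ((k-1).factorial:ℝ) * ((((n+1)-k)).factorial : ℝ)))) := by
      intro k
      exact ((hc.pow (2*k-1)).const_mul _).div_const _
    have hS := tendsto_finset_sum (Icc 1 (n+1)) (fun k _ => hterm k)
    have hG := (((hS.const_mul ((n.factorial:ℝ))).const_add C0).const_mul ((-1:ℝ)^(n+1))).neg
    convert hG using 2
    have hone : ∑ k ∈ Icc 1 (n+1), (-1:ℝ)^k * (1:ℝ)^(2*k-1) /
          ((2*(k:ℝ)-1) * ((k-1).factorial:ℝ) * ((((n+1)-k)).factorial : ℝ))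
        = ∑ k ∈ Icc 1 (n+1), (-1:ℝ)^k /
          ((2*(k:ℝ)-1) * ((k-1).factorial:ℝ) * ((((n+1)-k)).factorial : ℝ)) := by
      refine Finset.sum_congr rfl ?_
      intro k _
      rw [one_pow, mul_one]
    rw [hone]
    have := sum_eval_one n
    rw [this, binom_dfact n]
    simp [hC0]
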